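/- Let ε > 0 and let (z_n)_{n≥1} be a sequence of complex numbers with z₁ ≠ 0 such that ∑_{n≥1} |z_n| converges. Set 𝓜 = (1/|z₁|) ∑_{n=1}^∞ |z_n|. Then there exists an integer j with 1 ≤ j ≤ (8 + ε)𝓜 such that Re(∑_{n=1}^∞ z_n^j) ≥ (ε/(32 + 4ε)) · |z₁|^j. -/

import Mathlib

/-
Normalise so that a term of largest modulus is `u` with `‖u‖ = 1` and every term lies in the
closed unit disc. For `F_J(v) = Re ∑_{j=1}^{J} (J + 1 - j) v^j`, the identity
`J + 1 + 2 F_J(v) = (1 - |v|²) ∑_{k ≤ J} |1 + v + ⋯ + v^k|² + |v + ⋯ + v^{J+1}|²`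
gives `F_J(v) ≥ -(J + 1)/2` and `F_J(v) ≥ -(J + 2)|v|` on the disc. The weights
`λ_j = (J + 1 - j)(1 + Re u^j)/2` are nonnegative and satisfy
`∑ λ_j Re v^j = F_J(v)/2 + F_J(u v)/4 + F_J(ū v)/4`. Summing over the sequence, the term `u`
contributes about `J²/8` (through `F_J(ū u) = F_J(1) = J(J+1)/2`) and all the others at least
`-(J + 2)` times their total modulus `𝓜 - 1`, while `∑ λ_j = J(J+1)/4 + F_J(u)/2`.
For `J = ⌊(8 + ε)𝓜⌋` the weighted mean of the normalised power sums `Re ∑ z_n^j` exceeds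
`δ = ε/(32 + 4ε)`, so one of them does.
-/

open Finset Complex

lemma one_sub_norm_pow_le_mul_norm_geom_sum {R : Type*} [NormedRing R] [NormOneClass R] (v : R)
    (k : ℕ) : 1 - ‖v‖ ^ k ≤ (1 + ‖v‖) * ‖∑ i ∈ range k, v ^ i‖ :=
  calc 1 - ‖v‖ ^ k ≤ ‖(1 : R)‖ - ‖v ^ k‖ := by rw [norm_one]; gcongr; exact norm_pow_le v k
    _ ≤ ‖1 - v ^ k‖ := norm_sub_norm_le _ _
    _ ≤ ‖1 - v‖ * ‖∑ i ∈ range k, v ^ i‖ := by rw [← mul_neg_geom_sum]; exact norm_mul_le _ _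
    _ ≤ (1 + ‖v‖) * ‖∑ i ∈ range k, v ^ i‖ := by
      gcongr
      simpa using norm_sub_le (1 : R) v

-- `fejerSum J` and `fejerWeight J u j` are `F_J` and `λ_{j+1}` above, indexed from `j = 0`.
def fejerSum (J : ℕ) (v : ℂ) : ℝ := ∑ j ∈ range J, ((J : ℝ) - j) * (v ^ (j + 1)).re

section fejerSum

variable (J : ℕ) (v : ℂ)

lemma fejerSum_succ : fejerSum (J + 1) v = fejerSum J v + (v * ∑ i ∈ range (J + 1), v ^ i).re := by
  have h : (v * ∑ i ∈ range (J + 1), v ^ i).re = ∑ j ∈ range (J + 1), (v ^ (j + 1)).re := by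
    simp [mul_sum, pow_succ', re_sum]
  rw [h, fejerSum, fejerSum, sum_range_succ, sum_range_succ (fun j => (v ^ (j + 1)).re),
    ← add_assoc, ← sum_add_distrib]
  push_cast
  ring_nf

lemma fejerSum_one : fejerSum J 1 = J * (J + 1) / 2 := by
  induction J with
  | zero => simp [fejerSum]
  | succ J ih => rw [fejerSum_succ, ih]; simp; ring

lemma fejerSum_conj : fejerSum J ((starRingEnd ℂ) v) = fejerSum J v := by
  simp [fejerSum, ← map_pow]

lemma add_two_mul_fejerSum_eq :
    J + 1 + 2 * fejerSum J v =
      (1 - normSq v) * ∑ k ∈ range (J + 1), normSq (∑ i ∈ range (k + 1), v ^ i)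
        + normSq (v * ∑ i ∈ range (J + 1), v ^ i) := by
  induction J with
  | zero => simp [fejerSum]
  | succ J ih =>
    have hS : ∑ i ∈ range (J + 2), v ^ i = v * ∑ i ∈ range (J + 1), v ^ i + 1 := geom_sum_succ
    rw [fejerSum_succ, sum_range_succ _ (J + 1), hS]
    simp only [normSq_mul, normSq_add, map_one, mul_one] at ih ⊢
    push_cast
    linear_combination ih

variable {v}

lemma neg_half_le_fejerSum (hv : ‖v‖ ≤ 1) : -((J + 1) / 2 : ℝ) ≤ fejerSum J v := by
  have hv2 : normSq v ≤ 1 := by rw [normSq_eq_norm_sq]; exact pow_le_one₀ (norm_nonneg v) hv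
  have := add_two_mul_fejerSum_eq J v
  have : 0 ≤ (1 - normSq v) * ∑ k ∈ range (J + 1), normSq (∑ i ∈ range (k + 1), v ^ i) :=
    mul_nonneg (by linarith) (sum_nonneg fun _ _ => normSq_nonneg _)
  linarith [normSq_nonneg (v * ∑ i ∈ range (J + 1), v ^ i)]

lemma neg_mul_norm_le_fejerSum (hv : ‖v‖ ≤ 1) : -((J + 2) * ‖v‖) ≤ fejerSum J v := by
  set r := ‖v‖ with hr
  have hr0 : 0 ≤ r := norm_nonneg v
  have hterm (k : ℕ) : (1 - r) * (1 - 2 * r ^ (k + 1)) ≤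
      (1 + r) * ((1 - normSq v) * normSq (∑ i ∈ range (k + 1), v ^ i)) := by
    have hg := one_sub_norm_pow_le_mul_norm_geom_sum v (k + 1)
    have ha0 : 0 ≤ r ^ (k + 1) := pow_nonneg hr0 _
    have ha1 : r ^ (k + 1) ≤ 1 := pow_le_one₀ hr0 hv
    rw [normSq_eq_norm_sq, normSq_eq_norm_sq, ← hr]
    have hsq : (1 - r ^ (k + 1)) ^ 2 ≤ ((1 + r) * ‖∑ i ∈ range (k + 1), v ^ i‖) ^ 2 :=
      pow_le_pow_left₀ (by linarith) hg 2
    nlinarith [sq_nonneg (r ^ (k + 1))]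
  have hgeom : ∑ k ∈ range (J + 1), (1 - r) * (1 - 2 * r ^ (k + 1)) =
      (1 - r) * (J + 1) - 2 * r * (1 - r ^ (J + 1)) := by
    calc ∑ k ∈ range (J + 1), (1 - r) * (1 - 2 * r ^ (k + 1))
        = ∑ k ∈ range (J + 1), ((1 - r) - 2 * r * ((1 - r) * r ^ k)) :=
          sum_congr rfl fun k _ => by ring
      _ = (1 - r) * (J + 1) - 2 * r * ((1 - r) * ∑ k ∈ range (J + 1), r ^ k) := by
          rw [sum_sub_distrib, sum_const, ← mul_sum, ← mul_sum]; simp; ring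
      _ = _ := by rw [mul_neg_geom_sum]
  have hsum := sum_le_sum fun k (_ : k ∈ range (J + 1)) => hterm k
  rw [hgeom, ← mul_sum, ← mul_sum] at hsum
  have hid := add_two_mul_fejerSum_eq J v
  have hrJ : 0 ≤ r ^ (J + 1) := pow_nonneg hr0 _
  have hN := normSq_nonneg (v * ∑ i ∈ range (J + 1), v ^ i)
  have h1 : (1 - r) * (J + 1) - 2 * r ≤ (1 + r) * (J + 1 + 2 * fejerSum J v) := by
    rw [hid]; nlinarith [mul_nonneg (by linarith : 0 ≤ 1 + r) hN, mul_nonneg hr0 hrJ]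
  have h2 : -((J + 2) * r) ≤ (1 + r) * fejerSum J v := by linarith
  by_contra! hF
  nlinarith [mul_nonneg hr0 (by nlinarith : 0 ≤ -fejerSum J v)]

end fejerSum

noncomputable def fejerWeight (J : ℕ) (u : ℂ) (j : ℕ) : ℝ :=
  ((J : ℝ) - j) * (1 + (u ^ (j + 1)).re) / 2

section fejerWeight

variable {J : ℕ} {u : ℂ}

lemma fejerWeight_nonneg (hu : ‖u‖ ≤ 1) {j : ℕ} (hj : j ∈ range J) : 0 ≤ fejerWeight J u j := by
  have hjJ : (j : ℝ) ≤ J := by exact_mod_cast (mem_range.mp hj).le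
  have hre : -1 ≤ (u ^ (j + 1)).re := by
    have := abs_re_le_norm (u ^ (j + 1))
    rw [norm_pow] at this
    linarith [abs_le.mp (this.trans (pow_le_one₀ (norm_nonneg u) hu))]
  unfold fejerWeight
  apply div_nonneg (mul_nonneg _ _) zero_le_two <;> linarith

variable (J u)

lemma sum_fejerWeight_mul_re_pow (v : ℂ) :
    ∑ j ∈ range J, fejerWeight J u j * (v ^ (j + 1)).re =
      fejerSum J v / 2 + fejerSum J (u * v) / 4 + fejerSum J ((starRingEnd ℂ) u * v) / 4 := by
  simp only [fejerSum, fejerWeight, sum_div, ← sum_add_distrib]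
  refine sum_congr rfl fun j _ => ?_
  simp only [mul_pow, ← map_pow, mul_re, conj_re, conj_im]
  ring

lemma sum_fejerWeight : ∑ j ∈ range J, fejerWeight J u j = J * (J + 1) / 4 + fejerSum J u / 2 := by
  have h := sum_fejerWeight_mul_re_pow J u 1
  simp only [one_pow, one_re, mul_one, fejerSum_one, fejerSum_conj] at h
  rw [h]; ring

variable {J u}

lemma neg_mul_norm_le_sum_fejerWeight_mul_re_pow (hu : ‖u‖ = 1) {v : ℂ} (hv : ‖v‖ ≤ 1) :
    -((J + 2) * ‖v‖) ≤ ∑ j ∈ range J, fejerWeight J u j * (v ^ (j + 1)).re := by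
  have huv : ‖u * v‖ = ‖v‖ := by rw [norm_mul, hu, one_mul]
  have hcv : ‖(starRingEnd ℂ) u * v‖ = ‖v‖ := by rw [norm_mul, norm_conj, hu, one_mul]
  have h1 := neg_mul_norm_le_fejerSum J hv
  have h2 := neg_mul_norm_le_fejerSum J (huv.trans_le hv)
  have h3 := neg_mul_norm_le_fejerSum J (hcv.trans_le hv)
  rw [huv] at h2
  rw [hcv] at h3
  rw [sum_fejerWeight_mul_re_pow]
  linarith

lemma le_sum_fejerWeight_mul_re_pow_self (hu : ‖u‖ = 1) :
    fejerSum J u / 2 + ((J : ℝ) ^ 2 - 1) / 8 ≤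
      ∑ j ∈ range J, fejerWeight J u j * (u ^ (j + 1)).re := by
  have hconj : (starRingEnd ℂ) u * u = 1 := by
    rw [mul_comm, mul_conj, normSq_eq_norm_sq, hu]; norm_num
  have h := neg_half_le_fejerSum J (v := u * u) (by rw [norm_mul, hu, one_mul])
  rw [sum_fejerWeight_mul_re_pow, hconj, fejerSum_one]
  nlinarith

end fejerWeight

section sequence

variable {w : ℕ → ℂ}

lemma summable_pow_succ_of_norm_le_one (hw : ∀ n, ‖w n‖ ≤ 1) (hsum : Summable fun n => ‖w n‖)
    (k : ℕ) : Summable fun n => w n ^ (k + 1) :=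
  .of_norm_bounded hsum fun n => by
    rw [norm_pow]; exact pow_le_of_le_one (norm_nonneg _) (hw n) k.succ_ne_zero

lemma le_sum_fejerWeight_mul_re_tsum_pow (hw : ∀ n, ‖w n‖ ≤ 1) (hsum : Summable fun n => ‖w n‖)
    {m : ℕ} (hm : ‖w m‖ = 1) (J : ℕ) :
    fejerSum J (w m) / 2 + ((J : ℝ) ^ 2 - 1) / 8 - (J + 2) * ((∑' n, ‖w n‖) - 1) ≤
      ∑ j ∈ range J, fejerWeight J (w m) j * (∑' n, w n ^ (j + 1)).re := by
  set T : ℕ → ℝ := fun n => ∑ j ∈ range J, fejerWeight J (w m) j * (w n ^ (j + 1)).re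
  have hre (j : ℕ) : Summable fun n => (w n ^ (j + 1)).re :=
    (summable_pow_succ_of_norm_le_one hw hsum j).mapL reCLM
  have hT : Summable T := summable_sum fun j _ => (hre j).mul_left _
  have hswap : ∑ j ∈ range J, fejerWeight J (w m) j * (∑' n, w n ^ (j + 1)).re = ∑' n, T n := by
    rw [Summable.tsum_finsetSum fun j _ => (hre j).mul_left _]
    refine sum_congr rfl fun j _ => ?_
    rw [re_tsum (summable_pow_succ_of_norm_le_one hw hsum j), tsum_mul_left]
  set g : ℕ → ℝ := fun n => T n + (J + 2) * ‖w n‖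
  have hg : Summable g := hT.add (hsum.mul_left _)
  have hg_nonneg (n : ℕ) : 0 ≤ g n := by
    have := neg_mul_norm_le_sum_fejerWeight_mul_re_pow (J := J) hm (hw n)
    simp only [g, T]; linarith
  have hgm : g m ≤ ∑' n, g n := hg.le_tsum m fun n _ => hg_nonneg n
  rw [hT.tsum_add (hsum.mul_left _), tsum_mul_left] at hgm
  have hTm := le_sum_fejerWeight_mul_re_pow_self (J := J) hm
  simp only [g, T, hm] at hgm
  rw [hswap]
  linarith

theorem exists_lt_re_tsum_pow_of_norm_le_one (hw : ∀ n, ‖w n‖ ≤ 1)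
    (hsum : Summable fun n => ‖w n‖) {m : ℕ} (hm : ‖w m‖ = 1) {J : ℕ} {δ : ℝ} (hδ0 : 0 ≤ δ)
    (hδ1 : δ ≤ 1)
    (hJ : 3 * (J + 1) + 8 * (J + 2) * ((∑' n, ‖w n‖) - 1) < J * (J + 1) * (1 - 2 * δ)) :
    ∃ j < J, δ < (∑' n, w n ^ (j + 1)).re := by
  have hlow := le_sum_fejerWeight_mul_re_tsum_pow hw hsum hm J
  have hF := neg_half_le_fejerSum J hm.le
  have hlt : ∑ j ∈ range J, fejerWeight J (w m) j * δ <
      ∑ j ∈ range J, fejerWeight J (w m) j * (∑' n, w n ^ (j + 1)).re := by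
    rw [← sum_mul, sum_fejerWeight]
    nlinarith
  obtain ⟨j, hj, hlt⟩ := exists_lt_of_sum_lt hlt
  exact ⟨j, mem_range.mp hj, lt_of_mul_lt_mul_left hlt (fejerWeight_nonneg hm.le hj)⟩

end sequence

theorem exists_lt_re_tsum_pow {z : ℕ → ℂ} {m : ℕ} (hmax : ∀ n, ‖z n‖ ≤ ‖z m‖) (hm : z m ≠ 0)
    (hsum : Summable fun n => ‖z n‖) {J : ℕ} {δ : ℝ} (hδ0 : 0 ≤ δ) (hδ1 : δ ≤ 1)
    (hJ : 3 * (J + 1) + 8 * (J + 2) * ((∑' n, ‖z n‖) / ‖z m‖ - 1) < J * (J + 1) * (1 - 2 * δ)) :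
    ∃ j < J, δ * ‖z m‖ ^ (j + 1) < (∑' n, z n ^ (j + 1)).re := by
  set R := ‖z m‖
  have hR : 0 < R := norm_pos_iff.mpr hm
  have hnorm (n : ℕ) : ‖z n / R‖ = ‖z n‖ / R := by
    rw [norm_div, norm_real, Real.norm_of_nonneg hR.le]
  have hw (n : ℕ) : ‖z n / R‖ ≤ 1 := by rw [hnorm]; exact div_le_one_of_le₀ (hmax n) hR.le
  have hsumw : Summable fun n => ‖z n / R‖ := by simpa only [hnorm] using hsum.div_const R
  have htsum : ∑' n, ‖z n / R‖ = (∑' n, ‖z n‖) / R := by simp only [hnorm, tsum_div_const]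
  obtain ⟨j, hjJ, hj⟩ := exists_lt_re_tsum_pow_of_norm_le_one hw hsumw
    (by rw [hnorm, div_self hR.ne']) hδ0 hδ1 (by rwa [htsum])
  refine ⟨j, hjJ, ?_⟩
  have hscale : ∑' n, z n ^ (j + 1) = ((R ^ (j + 1) : ℝ) : ℂ) * ∑' n, (z n / R) ^ (j + 1) := by
    rw [← tsum_mul_left]
    refine tsum_congr fun n => ?_
    rw [ofReal_pow, ← mul_pow, mul_div_cancel₀ _ (ofReal_ne_zero.mpr hR.ne')]
  rw [hscale, re_ofReal_mul, mul_comm δ]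
  exact mul_lt_mul_of_pos_left hj (pow_pos hR _)

lemma three_mul_add_eight_mul_lt_of_lt_add_one {ε J M : ℝ} (hε : 0 < ε) (hJ0 : 0 ≤ J)
    (hJ : (8 + ε) * M < J + 1) :
    3 * (J + 1) + 8 * (J + 2) * (M - 1) < J * (J + 1) * (1 - 2 * (ε / (32 + 4 * ε))) := by
  have h : 1 - 2 * (ε / (32 + 4 * ε)) = (16 + ε) / (2 * (8 + ε)) := by field_simp; ring
  rw [h, ← mul_div_assoc, lt_div_iff₀ (by positivity)]
  nlinarith [mul_lt_mul_of_pos_left hJ (by positivity : 0 < 16 * (J + 2)), mul_nonneg hε.le hJ0,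
    mul_nonneg (mul_nonneg hε.le hJ0) hJ0]

lemma exists_forall_le_of_tendsto_cofinite_zero {ι : Type*} {f : ι → ℝ}
    (hf : Filter.Tendsto f Filter.cofinite (nhds 0)) {a : ι} (ha : 0 < f a) :
    ∃ m, ∀ n, f n ≤ f m := by
  have hfin : {n | f a ≤ f n}.Finite := by
    simpa only [not_lt] using Filter.eventually_cofinite.mp (hf.eventually (eventually_lt_nhds ha))
  obtain ⟨m, -, hm⟩ := Set.exists_max_image _ f hfin ⟨a, le_refl (f a)⟩
  refine ⟨m, fun n => ?_⟩
  by_cases h : f a ≤ f n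
  · exact hm n h
  · exact (not_le.mp h).le.trans (hm a (le_refl (f a)))

/-- **Power sum lower bound** (Corollary 2.12).  Here `z n` denotes the term `z_{n+1}` of the
sequence `(z_n)_{n ≥ 1}`; in particular `z 0` is the first term `z₁`.  If `z₁ ≠ 0` and
`∑ |z_n|` converges, then with `𝓜 = (∑ |z_n|)/|z₁|` there is an integer `1 ≤ j ≤ (8+ε)𝓜` with
`Re (∑ z_n^j) ≥ (ε/(32+4ε)) |z₁|^j`. -/
theorem power_sum_lower_bound (ε : ℝ) (hε : 0 < ε) (z : ℕ → ℂ) (hz1 : z 0 ≠ 0)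
    (hsum : Summable fun n => ‖z n‖) :
    ∃ j : ℕ, 1 ≤ j ∧
      (j : ℝ) ≤ (8 + ε) * ((∑' n : ℕ, ‖z n‖) / ‖z 0‖) ∧
      ε / (32 + 4 * ε) * ‖z 0‖ ^ j ≤ (∑' n : ℕ, z n ^ j).re := by
  have hz0 : 0 < ‖z 0‖ := norm_pos_iff.mpr hz1
  obtain ⟨m, hmax⟩ := exists_forall_le_of_tendsto_cofinite_zero hsum.tendsto_cofinite_zero hz0
  have hzm : 0 < ‖z m‖ := hz0.trans_le (hmax 0)
  have hM : 0 ≤ (8 + ε) * ((∑' n, ‖z n‖) / ‖z m‖) := by positivity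
  obtain ⟨j, hjJ, hj⟩ := exists_lt_re_tsum_pow hmax (norm_pos_iff.mp hzm) hsum
    (by positivity) (div_le_one_of_le₀ (by linarith) (by positivity))
    (three_mul_add_eight_mul_lt_of_lt_add_one hε (Nat.cast_nonneg _) (Nat.lt_floor_add_one _))
  refine ⟨j + 1, by omega, ?_, ?_⟩
  · calc ((j + 1 : ℕ) : ℝ) ≤ ⌊(8 + ε) * ((∑' n, ‖z n‖) / ‖z m‖)⌋₊ := by exact_mod_cast hjJ
      _ ≤ (8 + ε) * ((∑' n, ‖z n‖) / ‖z m‖) := Nat.floor_le hM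
      _ ≤ (8 + ε) * ((∑' n, ‖z n‖) / ‖z 0‖) := by
        gcongr
        exact hmax 0
  · calc ε / (32 + 4 * ε) * ‖z 0‖ ^ (j + 1) ≤ ε / (32 + 4 * ε) * ‖z m‖ ^ (j + 1) := by
          gcongr; exact hmax 0
      _ ≤ (∑' n, z n ^ (j + 1)).re := hj.le
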